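/- arXiv:2012.15014 — 8 statements merged into one kernel-verified Lean document; each statement's English description precedes it below -/
import Mathlib

section
/- Let p be a prime, A a commutative ring in which multiplication by p is injective, and φ : A → A a ring homomorphism with φ(x) − x^p ∈ pA for every x ∈ A; let δ : A → A be the unique map with p·δ(x) = φ(x) − x^p, and write δ^k for its k-fold iterate. Suppose E, h, f₀ ∈ A satisfy h·φ(E) = φ(f₀), and define recursively f_{k+1} := δ(f_k) − δ^k(h)·δ(E^{p^k}) for k ≥ 0. Then for every k ≥ 0 one has φ(f_k) = δ^k(h)·φ(E)^{p^k}, and p·f_{k+1} = −(f_k)^p + δ^k(h)·E^{p^{k+1}}. -/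
/-- The δ-ring recursion underlying Proposition 3.12: given a Frobenius lift `φ` on a
`p`-torsion-free commutative ring `A` with associated `δ`-structure, elements
`E h f₀` with `h * φ E = φ f₀`, and the recursively defined `f (k+1) = δ (f k) - δ^[k] h * δ (E ^ p ^ k)`,
one has `φ (f k) = δ^[k] h * (φ E) ^ p ^ k` and `p * f (k+1) = -(f k) ^ p + δ^[k] h * E ^ p ^ (k + 1)`. -/
theorem statement0 (p : ℕ) (hp : p.Prime) (A : Type*) [CommRing A]
    (hptf : ∀ x : A, (p : A) * x = 0 → x = 0)
    (φ : A →+* A) (hφ : ∀ x : A, ∃ y : A, φ x - x ^ p = (p : A) * y)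
    (δ : A → A) (hδ : ∀ x : A, (p : A) * δ x = φ x - x ^ p)
    (E h f₀ : A) (hhE : h * φ E = φ f₀)
    (f : ℕ → A) (hf0 : f 0 = f₀)
    (hfrec : ∀ k : ℕ, f (k + 1) = δ (f k) - δ^[k] h * δ (E ^ p ^ k)) :
    ∀ k : ℕ,
      φ (f k) = δ^[k] h * (φ E) ^ p ^ k ∧
      (p : A) * f (k + 1) = -(f k) ^ p + δ^[k] h * E ^ p ^ (k + 1) := by
  -- second statement follows from the first at the same index
  have second : ∀ k : ℕ, φ (f k) = δ^[k] h * (φ E) ^ p ^ k →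
      (p : A) * f (k + 1) = -(f k) ^ p + δ^[k] h * E ^ p ^ (k + 1) := by
    intro k ih
    have h1 := hδ (f k)
    have h2 := hδ (E ^ p ^ k)
    have hE : φ (E ^ p ^ k) = (φ E) ^ p ^ k := map_pow φ E _
    have hEp : (E ^ p ^ k) ^ p = E ^ p ^ (k + 1) := by rw [← pow_mul, ← pow_succ]
    rw [hE, hEp] at h2
    rw [hfrec k]
    linear_combination h1 - δ^[k] h * h2 + ih
  have key : ∀ k : ℕ, φ (f k) = δ^[k] h * (φ E) ^ p ^ k := by
    intro k
    induction k with
    | zero => simp [hf0, ← hhE, mul_comm]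
    | succ k ih =>
      have hsec := second k ih
      have hφf : (p : A) * φ (f (k + 1)) =
          -(φ (f k)) ^ p + φ (δ^[k] h) * (φ E) ^ p ^ (k + 1) := by
        have := congrArg φ hsec
        simpa using this
      have hpow : ((φ E) ^ p ^ k) ^ p = (φ E) ^ p ^ (k + 1) := by
        rw [← pow_mul, ← pow_succ]
      have ihp : (φ (f k)) ^ p = (δ^[k] h) ^ p * (φ E) ^ p ^ (k + 1) := by
        rw [ih, mul_pow, hpow]
      have h3 := hδ (δ^[k] h)
      have h6 : δ^[k + 1] h = δ (δ^[k] h) := Function.iterate_succ_apply' δ k h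
      have hz : (p : A) * (φ (f (k + 1)) - δ (δ^[k] h) * (φ E) ^ p ^ (k + 1)) = 0 := by
        linear_combination hφf - (φ E) ^ p ^ (k + 1) * h3 - ihp
      have := hptf _ hz
      rw [h6]
      exact sub_eq_zero.mp this
  intro k
  exact ⟨key k, second k (key k)⟩
end

section
/- Let p be a prime, k a perfect field of characteristic p, W(k) its ring of p-typical Witt vectors, and F : W(k) → W(k) the Witt vector Frobenius. Define φ on the power series ring W(k)[[z]] by φ(Σ_n b_n z^n) = Σ_n F(b_n) z^{pn}. Then for every unit λ ∈ W(k)[[z]] whose constant coefficient is 1, there exists a unique power series b ∈ W(k)[[z]] with constant coefficient 1 such that φ(b) = λ·b. -/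
/-!
Comparing coefficients of `z^m` in `φ(b) = λ b` (with `λ₀ = 1`) gives
`b_m = [p ∣ m] F(b_{m/p}) - ∑_{0 < i ≤ m} λ_i b_{m-i}`, whose right-hand side involves only
coefficients `b_j` with `j < m` as soon as `m > 0` (because `m / p < m`). So the recursion,
started at `b₀ = 1`, determines `b` uniquely, and the series it defines is a solution.
-/

/-- The map `φ` on `W(k)[[z]]` acting as the Witt vector Frobenius on coefficients and
sending `z` to `z^p`: the coefficient of `z^m` in `φ b` is `F (b_{m/p})` if `p ∣ m` and `0`
otherwise. -/
noncomputable def wittSeriesFrobenius (p : ℕ) [hp : Fact p.Prime] (k : Type*) [CommRing k]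
    [CharP k p] (b : PowerSeries (WittVector p k)) : PowerSeries (WittVector p k) :=
  PowerSeries.mk fun m =>
    if p ∣ m then WittVector.frobenius (PowerSeries.coeff (m / p) b) else 0

open Finset

noncomputable section

namespace PowerSeries

variable {R : Type*} [CommRing R]

theorem coeff_mul_eq_add_sum_of_constantCoeff_eq_one {a : R⟦X⟧} (ha : constantCoeff a = 1)
    (b : R⟦X⟧) (m : ℕ) :
    coeff m (a * b) = coeff m b + ∑ i ∈ range m, coeff (i + 1) a * coeff (m - (i + 1)) b := by
  rw [coeff_mul, Nat.sum_antidiagonal_eq_sum_range_succ_mk, sum_range_succ']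
  simp [add_comm, coeff_zero_eq_constantCoeff, ha]

variable (σ : R →+* R) (p : ℕ) (a : R⟦X⟧)

/-- The value `b_m` is forced to take if `b` solves `expand p (map σ b) = a * b`, computed from
the values `c j` with `j < m` (for `m > 0`). -/
def frobeniusStep (c : ℕ → R) (m : ℕ) : R :=
  (if p ∣ m then σ (c (m / p)) else 0) - ∑ i ∈ range m, coeff (i + 1) a * c (m - (i + 1))

theorem expand_map_eq_mul_iff (hp : p ≠ 0) (ha : constantCoeff a = 1) (b : R⟦X⟧) :
    expand p hp (map σ b) = a * b ↔ ∀ m, coeff m b = frobeniusStep σ p a (coeff · b) m := by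
  simp only [PowerSeries.ext_iff, coeff_expand, coeff_map, frobeniusStep,
    coeff_mul_eq_add_sum_of_constantCoeff_eq_one ha, eq_sub_iff_add_eq]
  refine forall_congr' fun m => ?_
  split_ifs <;> exact eq_comm

variable {p}

theorem frobeniusStep_congr (hp : 1 < p) {c d : ℕ → R} {m : ℕ} (hm : 0 < m)
    (h : ∀ j < m, c j = d j) : frobeniusStep σ p a c m = frobeniusStep σ p a d m := by
  unfold frobeniusStep
  rw [h (m / p) (Nat.div_lt_self hm hp)]
  congr 1
  exact sum_congr rfl fun i hi => by rw [h _ (by simp at hi; omega)]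

-- The truncation to `j < m + 1` only serves to make the recursion visibly well founded.
def frobeniusSolution (hp : 1 < p) : ℕ → R
  | 0 => 1
  | m + 1 => frobeniusStep σ p a (fun j => if j < m + 1 then frobeniusSolution hp j else 0) (m + 1)
  decreasing_by assumption

theorem frobeniusSolution_succ (hp : 1 < p) (m : ℕ) :
    frobeniusSolution σ a hp (m + 1) = frobeniusStep σ p a (frobeniusSolution σ a hp) (m + 1) := by
  rw [frobeniusSolution]
  exact frobeniusStep_congr σ a hp m.succ_pos fun j hj => if_pos hj

theorem eq_frobeniusSolution (hp : 1 < p) {c : ℕ → R} (h0 : c 0 = 1)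
    (hc : ∀ m, c (m + 1) = frobeniusStep σ p a c (m + 1)) : c = frobeniusSolution σ a hp := by
  funext m
  induction m using Nat.strong_induction_on with
  | _ m ih =>
    cases m with
    | zero => rw [h0, frobeniusSolution]
    | succ m => rw [hc, frobeniusSolution_succ, frobeniusStep_congr σ a hp m.succ_pos ih]

theorem existsUnique_expand_map_eq_mul (hp : 1 < p) (ha : constantCoeff a = 1) :
    ∃! b : R⟦X⟧, constantCoeff b = 1 ∧ expand p (zero_lt_one.trans hp).ne' (map σ b) = a * b := by
  simp only [expand_map_eq_mul_iff σ p a _ ha, ← coeff_zero_eq_constantCoeff_apply]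
  refine ⟨mk (frobeniusSolution σ a hp), ⟨?_, fun m => ?_⟩, fun b ⟨hb0, hb⟩ => ?_⟩
  · simp [frobeniusSolution]
  · cases m with
    | zero => simp [frobeniusStep, frobeniusSolution]
    | succ m => simp only [coeff_mk, frobeniusSolution_succ]
  · ext m
    rw [coeff_mk, ← eq_frobeniusSolution σ a hp (c := (coeff · b)) hb0 fun m => hb (m + 1)]

end PowerSeries

end

theorem wittSeriesFrobenius_eq_expand_map (p : ℕ) [Fact p.Prime] (k : Type*) [CommRing k]
    [CharP k p] (b : PowerSeries (WittVector p k)) :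
    wittSeriesFrobenius p k b = (b.map WittVector.frobenius).expand p (NeZero.ne p) := by
  ext m
  simp [wittSeriesFrobenius, PowerSeries.coeff_expand]

theorem statement2_general (p : ℕ) [hp : Fact p.Prime] (k : Type*) [Field k] [CharP k p]
    (lam : PowerSeries (WittVector p k))
    (hconst : PowerSeries.constantCoeff lam = 1) :
    ∃! b : PowerSeries (WittVector p k),
      PowerSeries.constantCoeff b = 1 ∧
      wittSeriesFrobenius p k b = lam * b := by
  simpa only [wittSeriesFrobenius_eq_expand_map] using
    PowerSeries.existsUnique_expand_map_eq_mul WittVector.frobenius lam hp.out.one_lt hconst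

/-- For every unit `λ` of `W(k)[[z]]` with constant coefficient `1` there is a unique
power series `b` with constant coefficient `1` such that `φ(b) = λ * b`. -/
theorem statement2 (p : ℕ) [hp : Fact p.Prime] (k : Type*) [Field k] [CharP k p]
    [PerfectRing k p] (lam : PowerSeries (WittVector p k))
    (hunit : IsUnit lam) (hconst : PowerSeries.constantCoeff lam = 1) :
    ∃! b : PowerSeries (WittVector p k),
      PowerSeries.constantCoeff b = 1 ∧
      wittSeriesFrobenius p k b = lam * b :=
  statement2_general p (hp := hp) k lam hconst
end

section
/- Let p be a prime, k a field of characteristic p, e ≥ 1 an integer and c ∈ k nonzero. Let A = (k[z]/(z^e))[u], a k-vector space with basis {z^l u^n : 0 ≤ l ≤ e−1, n ≥ 0}, and let D : A → A be the k-linear map with D(z^l u^n) = e·c·n·z^{l+e−1}·u^{n−1} (where z^{l+e−1} is computed in k[z]/(z^e)), i.e. D(f) = e·c·z^{e−1}·∂f/∂u. Then the kernel of D has k-basis {z^l u^n : 0 ≤ l ≤ e−1, n ≥ 0, and (l ≥ 1 or p ∣ e·n)}, and the cokernel A/D(A) has k-basis given by the images of {z^l u^n : 0 ≤ l ≤ e−1,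 n ≥ 0, and (l ≤ e−2 or p ∣ e·(n+1))}. -/
/-- The truncated polynomial ring `k[z]/(z^e)`. -/
abbrev TruncRing (k : Type*) [CommRing k] (e : ℕ) : Type _ :=
  Polynomial k ⧸ Ideal.span ({Polynomial.X ^ e} : Set (Polynomial k))

/-- The image of `z` in `k[z]/(z^e)`. -/
noncomputable def truncZ (k : Type*) [CommRing k] (e : ℕ) : TruncRing k e :=
  Ideal.Quotient.mk _ Polynomial.X

/-- The `k`-linear map `D : (k[z]/(z^e))[u] → (k[z]/(z^e))[u]`,
`D(f) = e·c·z^(e-1)·∂f/∂u`, so `D(z^l u^n) = e·c·n·z^(l+e-1)·u^(n-1)`. -/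
noncomputable def Dmap (k : Type*) [Field k] (e : ℕ) (c : k) :
    Polynomial (TruncRing k e) →ₗ[k] Polynomial (TruncRing k e) :=
  (LinearMap.mulLeft k (Polynomial.C ((e : TruncRing k e) *
      algebraMap k (TruncRing k e) c * (truncZ k e) ^ (e - 1)))).comp
    (Polynomial.derivative.restrictScalars k)

/-!
`D` is monomial in the basis `z^l u^n`: it sends `z^l u^n` to `e c n · z^(e-1) u^(n-1)` when
`l = 0` (since `z^(l+e-1) = 0` for `l ≥ 1`) and to `0` otherwise, and the shift
`(0, n) ↦ (e-1, n-1)` is injective where the coefficient `e c n` is nonzero. For such a map the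
kernel is spanned by the basis vectors with zero coefficient, and the image by the shifted
basis vectors with nonzero coefficient, so the remaining basis vectors give a basis of the
cokernel. In characteristic `p`, `e c n = 0` exactly when `p ∣ e n`.
-/

open Polynomial Submodule

namespace Module.Basis

variable {ι R M : Type*} [Ring R] [AddCommGroup M] [Module R M] (b : Basis ι R M)

noncomputable def spanImage (s : Set ι) : Basis s R (span R (b '' s)) :=
  (Basis.span (b.linearIndependent.comp _ Subtype.val_injective)).map
    (LinearEquiv.ofEq _ _ (by rw [Set.range_comp, Subtype.range_coe]))

@[simp]
theorem spanImage_apply (s : Set ι) (i : s) : (b.spanImage s i : M) = b i := by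
  simp [spanImage, Basis.span_apply]

noncomputable def quotientSpanImage {s t : Set ι} (h : IsCompl s t) :
    Basis t R (M ⧸ span R (b '' s)) :=
  (b.spanImage t).map (quotientEquivOfIsCompl _ _
    (b.linearIndependent.isCompl_span_image b.span_eq h)).symm

@[simp]
theorem quotientSpanImage_apply {s t : Set ι} (h : IsCompl s t) (i : t) :
    b.quotientSpanImage h i = Submodule.Quotient.mk (b i) := by
  simp [quotientSpanImage, quotientEquivOfIsCompl_symm_apply]

end Module.Basis

namespace LinearMap

variable {ι K M : Type*} [Field K] [AddCommGroup M] [Module K M] {b : Module.Basis ι K M}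
  {f : M →ₗ[K] M} {a : ι → K} {σ : ι → ι}

theorem repr_apply_of_apply_basis_eq_smul (hf : ∀ i, f (b i) = a i • b (σ i))
    (hσ : Set.InjOn σ {i | a i ≠ 0}) {i : ι} (hi : a i ≠ 0) (x : M) :
    b.repr (f x) (σ i) = b.repr x i * a i := by
  suffices (Finsupp.lapply (σ i) ∘ₗ b.repr.toLinearMap ∘ₗ f) =
      a i • (Finsupp.lapply i ∘ₗ b.repr.toLinearMap) from
    congr($this x).trans (mul_comm _ _)
  refine b.ext fun j => ?_
  by_cases hj : j = i
  · subst hj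
    simp [hf]
  by_cases ha : a j = 0
  · simp [hf, ha, hj]
  · have hne : σ j ≠ σ i := fun h => hj (hσ ha hi h)
    simp [hf, hne, hj]

theorem ker_eq_span_image_of_apply_basis_eq_smul (hf : ∀ i, f (b i) = a i • b (σ i))
    (hσ : Set.InjOn σ {i | a i ≠ 0}) :
    ker f = span K (b '' {i | a i = 0}) := by
  refine le_antisymm (fun x hx => ?_) (span_le.2 ?_)
  · rw [b.mem_span_image]
    intro i hi
    by_contra hai
    have := repr_apply_of_apply_basis_eq_smul hf hσ hai x
    rw [mem_ker.1 hx, map_zero, Finsupp.coe_zero, Pi.zero_apply, eq_comm,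
      mul_eq_zero_iff_right hai] at this
    exact Finsupp.mem_support_iff.1 hi this
  · rintro _ ⟨i, hi, rfl⟩
    simp [hf, show a i = 0 from hi]

theorem range_eq_span_image_of_apply_basis_eq_smul (hf : ∀ i, f (b i) = a i • b (σ i)) :
    range f = span K (b '' (σ '' {i | a i ≠ 0})) := by
  refine le_antisymm ?_ (span_le.2 ?_)
  · rw [range_eq_map, ← b.span_eq, map_span, span_le]
    rintro _ ⟨_, ⟨i, rfl⟩, rfl⟩
    by_cases hai : a i = 0
    · simp [hf, hai]
    · rw [SetLike.mem_coe, hf]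
      exact smul_mem _ _ (subset_span ⟨σ i, ⟨i, hai, rfl⟩, rfl⟩)
  · rintro _ ⟨_, ⟨i, hai, rfl⟩, rfl⟩
    have : b (σ i) = (a i)⁻¹ • f (b i) := by rw [hf, inv_smul_smul₀ hai]
    rw [SetLike.mem_coe, this]
    exact smul_mem _ _ (mem_range_self f (b i))

end LinearMap

section TruncatedPolynomial

variable {k : Type*} [Field k] {e : ℕ}

theorem truncZ_pow_eq_zero {m : ℕ} (hm : e ≤ m) : truncZ k e ^ m = 0 := by
  rw [truncZ, ← map_pow, Ideal.Quotient.eq_zero_iff_mem, Ideal.mem_span_singleton]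
  exact pow_dvd_pow _ hm

variable (k e) in
noncomputable def truncPowerBasis : Module.Basis (Fin e) k (TruncRing k e) :=
  (AdjoinRoot.powerBasis' (monic_X_pow (R := k) e)).basis.reindex (finCongr (by simp))

theorem truncPowerBasis_apply (i : Fin e) : truncPowerBasis k e i = truncZ k e ^ (i : ℕ) := by
  -- rewriting has to happen in `AdjoinRoot (X ^ e)`, whose instances the power basis carries
  have h : (AdjoinRoot.powerBasis' (monic_X_pow (R := k) e)).basis.reindex (finCongr (by simp)) i
      = AdjoinRoot.root (X ^ e : k[X]) ^ (i : ℕ) := by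
    rw [Module.Basis.reindex_apply, PowerBasis.basis_eq_pow, AdjoinRoot.powerBasis'_gen]
    rfl
  exact h

def monomialIndexEquiv (he : 1 ≤ e) : Fin e × ℕ ≃ {q : ℕ × ℕ // q.1 ≤ e - 1} where
  toFun i := ⟨(i.1, i.2), by omega⟩
  invFun q := (⟨q.1.1, by omega⟩, q.1.2)

noncomputable def monomialBasis (he : 1 ≤ e) :
    Module.Basis {q : ℕ × ℕ // q.1 ≤ e - 1} k (TruncRing k e)[X] :=
  ((truncPowerBasis k e).smulTower (basisMonomials (TruncRing k e))).reindex
    (monomialIndexEquiv he)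

theorem monomialBasis_apply (he : 1 ≤ e) (q : {q : ℕ × ℕ // q.1 ≤ e - 1}) :
    monomialBasis he q = C (truncZ k e ^ q.1.1) * X ^ q.1.2 := by
  simp [monomialBasis, monomialIndexEquiv, Module.Basis.smulTower_apply, truncPowerBasis_apply,
    smul_eq_C_mul, X_pow_eq_monomial]

end TruncatedPolynomial

section Dmap

variable {k : Type*} [Field k] {e : ℕ} (c : k)

theorem Dmap_C_mul_X_pow (l n : ℕ) :
    Dmap k e c (C (truncZ k e ^ l) * X ^ n) =
      (((e * n : ℕ) : k) * c) • (C (truncZ k e ^ (l + (e - 1))) * X ^ (n - 1)) := by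
  simp only [Dmap, LinearMap.coe_comp, Function.comp_apply, LinearMap.coe_restrictScalars,
    LinearMap.mulLeft_apply, derivative_C_mul, derivative_X_pow, Algebra.smul_def,
    Polynomial.algebraMap_apply, map_mul, map_natCast, Nat.cast_mul, pow_add]
  ring

variable (e) in
noncomputable def Dcoeff (q : {q : ℕ × ℕ // q.1 ≤ e - 1}) : k :=
  if q.1.1 = 0 then ((e * q.1.2 : ℕ) : k) * c else 0

-- At `n = 0` the value (with `0 - 1 = 0`) is junk, but there `Dcoeff` vanishes.
variable (e) in
def Dshift (q : {q : ℕ × ℕ // q.1 ≤ e - 1}) : {q : ℕ × ℕ // q.1 ≤ e - 1} :=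
  ⟨(e - 1, q.1.2 - 1), le_rfl⟩

theorem Dmap_monomialBasis (he : 1 ≤ e) (q : {q : ℕ × ℕ // q.1 ≤ e - 1}) :
    Dmap k e c (monomialBasis he q) = Dcoeff e c q • monomialBasis he (Dshift e q) := by
  rw [monomialBasis_apply, monomialBasis_apply, Dmap_C_mul_X_pow, Dcoeff, Dshift]
  split_ifs with hl
  · simp [hl]
  · simp [truncZ_pow_eq_zero (show e ≤ q.1.1 + (e - 1) by omega)]

theorem injOn_Dshift : Set.InjOn (Dshift e) {q | Dcoeff e c q ≠ 0} := by
  have hsupp : ∀ q, Dcoeff e c q ≠ 0 → q.1.1 = 0 ∧ q.1.2 ≠ 0 := fun q hq => by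
    unfold Dcoeff at hq
    split_ifs at hq with hl
    · exact ⟨hl, fun h0 => hq (by simp [h0])⟩
    · exact absurd rfl hq
  intro q hq q' hq' h
  obtain ⟨hl, hn⟩ := hsupp q hq
  obtain ⟨hl', hn'⟩ := hsupp q' hq'
  have := congr_arg (fun q => q.1.2) h
  simp only [Dshift] at this
  exact Subtype.ext (Prod.ext (hl.trans hl'.symm) (by omega))

variable (p : ℕ) [CharP k p] {c}

theorem Dcoeff_ne_zero_iff (hc : c ≠ 0) (q : {q : ℕ × ℕ // q.1 ≤ e - 1}) :
    Dcoeff e c q ≠ 0 ↔ q.1.1 = 0 ∧ ¬ p ∣ e * q.1.2 := by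
  by_cases hl : q.1.1 = 0
  · rw [Dcoeff, if_pos hl, Ne, mul_eq_zero, CharP.cast_eq_zero_iff k p]
    simp [hl, hc]
  · simp [Dcoeff, hl]

theorem setOf_Dcoeff_eq_zero (hc : c ≠ 0) :
    {q | Dcoeff e c q = 0} =
      {q : {q : ℕ × ℕ // q.1 ≤ e - 1} | 1 ≤ q.1.1 ∨ p ∣ e * q.1.2} := by
  ext q
  simpa [Nat.one_le_iff_ne_zero, or_iff_not_imp_left] using (Dcoeff_ne_zero_iff p hc q).not

theorem image_Dshift (hc : c ≠ 0) :
    Dshift e '' {q | Dcoeff e c q ≠ 0} =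
      {q : {q : ℕ × ℕ // q.1 ≤ e - 1} |
        q.1.1 + 1 ≤ e - 1 ∨ p ∣ e * (q.1.2 + 1)}ᶜ := by
  ext q
  simp only [Set.mem_image, Set.mem_ofPred_eq, Dcoeff_ne_zero_iff p hc, Set.mem_compl_iff,
    not_or]
  constructor
  · rintro ⟨q', ⟨hl, hp⟩, rfl⟩
    have hn : q'.1.2 ≠ 0 := fun h0 => hp (by simp [h0])
    refine ⟨by simp only [Dshift]; omega, ?_⟩
    simpa [Dshift, Nat.sub_add_cancel (Nat.one_le_iff_ne_zero.2 hn)] using hp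
  · rintro ⟨hl, hp⟩
    refine ⟨⟨(0, q.1.2 + 1), Nat.zero_le _⟩, ⟨rfl, hp⟩, Subtype.ext ?_⟩
    simp only [Dshift, Nat.add_sub_cancel]
    exact Prod.ext (by have := q.2; omega) rfl

theorem ker_Dmap (he : 1 ≤ e) (hc : c ≠ 0) :
    LinearMap.ker (Dmap k e c) =
      span k (monomialBasis he '' {q | 1 ≤ q.1.1 ∨ p ∣ e * q.1.2}) := by
  rw [LinearMap.ker_eq_span_image_of_apply_basis_eq_smul (Dmap_monomialBasis c he)
    (injOn_Dshift c), setOf_Dcoeff_eq_zero p hc]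

theorem range_Dmap (he : 1 ≤ e) (hc : c ≠ 0) :
    LinearMap.range (Dmap k e c) =
      span k (monomialBasis he '' {q | q.1.1 + 1 ≤ e - 1 ∨ p ∣ e * (q.1.2 + 1)}ᶜ) := by
  rw [LinearMap.range_eq_span_image_of_apply_basis_eq_smul (Dmap_monomialBasis c he),
    image_Dshift p hc]

end Dmap

theorem statement3_general (p : ℕ) (k : Type*) [Field k] [CharP k p]
    (e : ℕ) (he : 1 ≤ e) (c : k) (hc : c ≠ 0) :
    (∃ bker : Module.Basis {q : ℕ × ℕ // q.1 ≤ e - 1 ∧ (1 ≤ q.1 ∨ p ∣ e * q.2)} k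
        (LinearMap.ker (Dmap k e c)),
      ∀ q, (bker q : Polynomial (TruncRing k e))
          = Polynomial.C ((truncZ k e) ^ q.1.1) * Polynomial.X ^ q.1.2) ∧
    (∃ bcoker : Module.Basis {q : ℕ × ℕ // q.1 ≤ e - 1 ∧ (q.1 + 1 ≤ e - 1 ∨ p ∣ e * (q.2 + 1))} k
        (Polynomial (TruncRing k e) ⧸ LinearMap.range (Dmap k e c)),
      ∀ q, bcoker q = Submodule.Quotient.mk
          (Polynomial.C ((truncZ k e) ^ q.1.1) * Polynomial.X ^ q.1.2)) := by
  refine ⟨⟨(((monomialBasis he).spanImage _).map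
      (LinearEquiv.ofEq _ _ (ker_Dmap p he hc).symm)).reindex
      (Equiv.subtypeSubtypeEquivSubtypeInter _ fun q : ℕ × ℕ => 1 ≤ q.1 ∨ p ∣ e * q.2),
      fun q => ?_⟩,
    ⟨(((monomialBasis he).quotientSpanImage isCompl_compl.symm).map
      (quotEquivOfEq _ _ (range_Dmap p he hc).symm)).reindex
      (Equiv.subtypeSubtypeEquivSubtypeInter _
        fun q : ℕ × ℕ => q.1 + 1 ≤ e - 1 ∨ p ∣ e * (q.2 + 1)),
      fun q => ?_⟩⟩
  · rw [Module.Basis.reindex_apply, Module.Basis.map_apply, LinearEquiv.coe_ofEq_apply,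
      Module.Basis.spanImage_apply]
    exact monomialBasis_apply he _
  · rw [Module.Basis.reindex_apply, Module.Basis.map_apply, Module.Basis.quotientSpanImage_apply,
      quotEquivOfEq_mk]
    exact congr_arg _ (monomialBasis_apply he _)

/-- Proposition 6.9: the kernel of `D` has `k`-basis
`{z^l u^n : 0 ≤ l ≤ e-1, (l ≥ 1 ∨ p ∣ e·n)}` and the cokernel of `D` has `k`-basis the images
of `{z^l u^n : 0 ≤ l ≤ e-1, (l ≤ e-2 ∨ p ∣ e·(n+1))}`. -/
theorem statement3 (p : ℕ) (hp : p.Prime) (k : Type*) [Field k] [CharP k p]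
    (e : ℕ) (he : 1 ≤ e) (c : k) (hc : c ≠ 0) :
    (∃ bker : Module.Basis {q : ℕ × ℕ // q.1 ≤ e - 1 ∧ (1 ≤ q.1 ∨ p ∣ e * q.2)} k
        (LinearMap.ker (Dmap k e c)),
      ∀ q, (bker q : Polynomial (TruncRing k e))
          = Polynomial.C ((truncZ k e) ^ q.1.1) * Polynomial.X ^ q.1.2) ∧
    (∃ bcoker : Module.Basis {q : ℕ × ℕ // q.1 ≤ e - 1 ∧ (q.1 + 1 ≤ e - 1 ∨ p ∣ e * (q.2 + 1))} k
        (Polynomial (TruncRing k e) ⧸ LinearMap.range (Dmap k e c)),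
      ∀ q, bcoker q = Submodule.Quotient.mk
          (Polynomial.C ((truncZ k e) ^ q.1.1) * Polynomial.X ^ q.1.2)) :=
  statement3_general p k e he c hc
end

section
/- Let p be a prime and let e ≥ 1 and j be integers. For every natural number n with (p−1)·n ≠ p·e·j, the rational number n − p·e·j/(p−1) is a nonzero p-adic integer; put l(n) := v_p(n − p·e·j/(p−1)) ∈ ℕ and ñ(n) := n + p·e·(p^{l(n)} − 1)/(p−1). Then v_p(ñ(n) − p·e·(j−1)/(p−1)) = l(n), and consequently the map n ↦ ñ(n) is injective on {n ∈ ℕ : (p−1)·n ≠ p·e·j}. -/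
/-!
Write `N := (p-1)·n - p·e·j`, a nonzero integer. Then `n - p·e·j/(p-1) = N/(p-1)`, and since
`p` does not divide `p - 1` its valuation is `l = v_p(N) ≥ 0`. A direct computation gives
`ñ(n) - p·e·(j-1)/(p-1) = (N + p^(l+1)·e)/(p-1)`, and adding a multiple of `p^(l+1)` does not
change the valuation `l` of `N`. Injectivity follows: `ñ(n)` determines `l(n)` as the valuation
of `ñ(n) - p·e·(j-1)/(p-1)`, and for fixed `l` the map `n ↦ ñ(n)` is a translation.
-/

/-- The rational number `n - p*e*j/(p-1)`. -/
def stmt5x (p : ℕ) (e j : ℤ) (n : ℕ) : ℚ :=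
  (n : ℚ) - ((p : ℚ) * (e : ℚ) * (j : ℚ)) / ((p : ℚ) - 1)

/-- `l(n) := v_p(n - p*e*j/(p-1))`, as a natural number. -/
def stmt5l (p : ℕ) (e j : ℤ) (n : ℕ) : ℕ :=
  (padicValRat p (stmt5x p e j n)).toNat

/-- `ñ(n) := n + p*e*(p^(l(n)) - 1)/(p-1)`. -/
def stmt5ntilde (p : ℕ) (e j : ℤ) (n : ℕ) : ℚ :=
  (n : ℚ) + ((p : ℚ) * (e : ℚ)) * ((p : ℚ) ^ (stmt5l p e j n) - 1) / ((p : ℚ) - 1)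

theorem padicValInt_add_of_pow_succ_dvd {p : ℕ} (hp : p ≠ 1) {a b : ℤ} (ha : a ≠ 0)
    (hb : (p : ℤ) ^ (padicValInt p a + 1) ∣ b) : padicValInt p (a + b) = padicValInt p a := by
  set k := padicValInt p a
  have hak : (p : ℤ) ^ k ∣ a := padicValInt_dvd a
  have hak1 : ¬ (p : ℤ) ^ (k + 1) ∣ a := by
    rw [padicValInt_dvd_iff_of_ne_one hp]; omega
  have hsum : ¬ (p : ℤ) ^ (k + 1) ∣ a + b := fun h ↦
    hak1 (by simpa using dvd_sub h hb)
  have hsum' : (p : ℤ) ^ k ∣ a + b := dvd_add hak ((pow_dvd_pow _ k.le_succ).trans hb)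
  rw [padicValInt_dvd_iff_of_ne_one hp] at hsum hsum'
  omega

theorem padicValRat_intCast_div_of_not_dvd {p : ℕ} [Fact p.Prime] (a : ℤ) {d : ℤ}
    (hd : ¬ (p : ℤ) ∣ d) : padicValRat p ((a : ℚ) / d) = padicValInt p a := by
  rcases eq_or_ne a 0 with rfl | ha
  · simp
  have hd0 : d ≠ 0 := by rintro rfl; exact hd (dvd_zero _)
  rw [padicValRat.div (by exact_mod_cast ha) (by exact_mod_cast hd0), padicValRat.of_int,
    padicValRat.of_int, padicValInt.eq_zero_of_not_dvd hd, Nat.cast_zero, sub_zero]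

theorem Nat.Prime.not_intCast_dvd_sub_one {p : ℕ} (hp : p.Prime) : ¬ (p : ℤ) ∣ p - 1 := by
  intro h
  exact hp.ne_one (by exact_mod_cast Int.eq_one_of_dvd_one (by positivity) (dvd_sub_self_left.mp h))

section

variable {p : ℕ} (e j : ℤ) (n : ℕ)

theorem stmt5x_eq_intCast_div (hp : p ≠ 1) :
    stmt5x p e j n = (((p - 1) * n - p * e * j : ℤ) : ℚ) / ((p - 1 : ℤ) : ℚ) := by
  have : (p : ℚ) - 1 ≠ 0 := sub_ne_zero.mpr (by exact_mod_cast hp)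
  rw [stmt5x]; push_cast; field_simp

theorem stmt5ntilde_sub_eq_intCast_div (hp : p ≠ 1) :
    stmt5ntilde p e j n - p * e * (j - 1) / (p - 1) =
      (((p - 1) * n - p * e * j + p ^ (stmt5l p e j n + 1) * e : ℤ) : ℚ) /
        ((p - 1 : ℤ) : ℚ) := by
  have : (p : ℚ) - 1 ≠ 0 := sub_ne_zero.mpr (by exact_mod_cast hp)
  rw [stmt5ntilde]; push_cast; field_simp; ring

variable [hp : Fact p.Prime] {e j n}

theorem padicValRat_stmt5x :
    padicValRat p (stmt5x p e j n) = padicValInt p ((p - 1) * n - p * e * j) := by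
  rw [stmt5x_eq_intCast_div e j n hp.out.ne_one,
    padicValRat_intCast_div_of_not_dvd _ hp.out.not_intCast_dvd_sub_one]

theorem stmt5l_eq_padicValInt :
    stmt5l p e j n = padicValInt p ((p - 1) * n - p * e * j) := by
  rw [stmt5l, padicValRat_stmt5x, Int.toNat_natCast]

theorem stmt5x_ne_zero (h : ((p : ℤ) - 1) * n ≠ p * e * j) : stmt5x p e j n ≠ 0 := by
  rw [stmt5x_eq_intCast_div e j n hp.out.ne_one]
  exact div_ne_zero (Int.cast_ne_zero.mpr (sub_ne_zero.mpr h))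
    (Int.cast_ne_zero.mpr (sub_ne_zero.mpr (by exact_mod_cast hp.out.ne_one)))

theorem padicValRat_stmt5ntilde_sub (h : ((p : ℤ) - 1) * n ≠ p * e * j) :
    padicValRat p (stmt5ntilde p e j n - p * e * (j - 1) / (p - 1)) = stmt5l p e j n := by
  have hdvd : (p : ℤ) ^ (padicValInt p ((p - 1) * n - p * e * j) + 1) ∣
      p ^ (stmt5l p e j n + 1) * e := by
    rw [← stmt5l_eq_padicValInt]
    exact dvd_mul_right _ _
  rw [stmt5ntilde_sub_eq_intCast_div e j n hp.out.ne_one,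
    padicValRat_intCast_div_of_not_dvd _ hp.out.not_intCast_dvd_sub_one,
    padicValInt_add_of_pow_succ_dvd hp.out.ne_one (sub_ne_zero.mpr h) hdvd, stmt5l_eq_padicValInt]

theorem stmt5ntilde_injOn :
    Set.InjOn (stmt5ntilde p e j) {n : ℕ | ((p : ℤ) - 1) * n ≠ p * e * j} := by
  intro n₁ h₁ n₂ h₂ heq
  have hl : stmt5l p e j n₁ = stmt5l p e j n₂ := by
    have hv := padicValRat_stmt5ntilde_sub h₁
    rw [heq, padicValRat_stmt5ntilde_sub h₂] at hv
    exact_mod_cast hv.symm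
  have hn : (n₁ : ℚ) = n₂ := by simpa [stmt5ntilde, hl] using heq
  exact_mod_cast hn

end

theorem statement5_general (p : ℕ) (hp : p.Prime) (e j : ℤ) :
    (∀ n : ℕ, ((p : ℤ) - 1) * (n : ℤ) ≠ (p : ℤ) * e * j →
      stmt5x p e j n ≠ 0 ∧
      0 ≤ padicValRat p (stmt5x p e j n) ∧
      padicValRat p
          (stmt5ntilde p e j n - ((p : ℚ) * (e : ℚ) * ((j : ℚ) - 1)) / ((p : ℚ) - 1))
        = stmt5l p e j n) ∧
    Set.InjOn (stmt5ntilde p e j)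
      {n : ℕ | ((p : ℤ) - 1) * (n : ℤ) ≠ (p : ℤ) * e * j} := by
  have : Fact p.Prime := ⟨hp⟩
  refine ⟨fun n h ↦ ⟨stmt5x_ne_zero h, ?_, padicValRat_stmt5ntilde_sub h⟩,
    stmt5ntilde_injOn⟩
  rw [padicValRat_stmt5x]
  exact Nat.cast_nonneg _

/-- Propositions 6.21/6.24 ('the exponents of the targets are all different'): for `n` with
`(p-1)·n ≠ p·e·j`, the quantity `n - p·e·j/(p-1)` is a nonzero `p`-adic integer; with
`l(n)` its `p`-adic valuation and `ñ(n) = n + p·e·(p^(l(n))-1)/(p-1)` one has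
`v_p(ñ(n) - p·e·(j-1)/(p-1)) = l(n)`, and `n ↦ ñ(n)` is injective on that set. -/
theorem statement5 (p : ℕ) (hp : p.Prime) (e j : ℤ) (he : 1 ≤ e) :
    (∀ n : ℕ, ((p : ℤ) - 1) * (n : ℤ) ≠ (p : ℤ) * e * j →
      stmt5x p e j n ≠ 0 ∧
      0 ≤ padicValRat p (stmt5x p e j n) ∧
      padicValRat p
          (stmt5ntilde p e j n - ((p : ℚ) * (e : ℚ) * ((j : ℚ) - 1)) / ((p : ℚ) - 1))
        = stmt5l p e j n) ∧
    Set.InjOn (stmt5ntilde p e j)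
      {n : ℕ | ((p : ℤ) - 1) * (n : ℤ) ≠ (p : ℤ) * e * j} :=
  statement5_general p hp e j
end

section
/- Let p be a prime. For all integers m and r there is exactly one integer b with p·m ≤ b ≤ p·m + p − 1 such that p does not divide b and p − 1 divides b − r. -/
/-- Counting lemma from the proof of Lemma 7.4: for a prime `p` and integers `m`, `r`, there is
exactly one integer `b` with `p*m ≤ b ≤ p*m + p - 1` such that `p ∤ b` and `(p-1) ∣ (b - r)`. -/
theorem statement6 (p : ℕ) (hp : p.Prime) (m r : ℤ) :
    ∃! b : ℤ, ((p : ℤ) * m ≤ b ∧ b ≤ (p : ℤ) * m + (p : ℤ) - 1) ∧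
      ¬ (p : ℤ) ∣ b ∧ ((p : ℤ) - 1) ∣ (b - r) := by
  have hp2 : 2 ≤ (p : ℤ) := by exact_mod_cast hp.two_le
  set q : ℤ := (p : ℤ) - 1 with hq
  have hq1 : 1 ≤ q := by omega
  set t : ℤ := (r - (p : ℤ) * m) % q with ht
  have ht0 : 0 ≤ t := Int.emod_nonneg _ (by omega)
  have htq : t < q := Int.emod_lt_of_pos _ (by omega)
  have hdvd : q ∣ (r - (p : ℤ) * m - t) := Int.dvd_self_sub_of_emod_eq rfl
  -- helper: p does not divide p*m + s for 0 < s < p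
  have hnd : ∀ s : ℤ, 0 < s → s < (p : ℤ) → ¬ (p : ℤ) ∣ ((p : ℤ) * m + s) := by
    intro s hs1 hs2 hsd
    have : (p : ℤ) ∣ s := (dvd_add_right ⟨m, rfl⟩).mp hsd
    have := Int.le_of_dvd hs1 this
    omega
  set b : ℤ := if t = 0 then (p : ℤ) * m + q else (p : ℤ) * m + t with hb
  refine ⟨b, ⟨⟨?_, ?_⟩, ?_, ?_⟩, ?_⟩
  · rw [hb]; split <;> omega
  · rw [hb]; split <;> omega
  · rw [hb]; split
    · exact hnd q (by omega) (by omega)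
    · exact hnd t (by omega) (by omega)
  · rw [hb]; split
    · rename_i h0
      obtain ⟨k, hk⟩ := hdvd
      exact ⟨1 - k, by rw [h0] at hk; linarith [hk]⟩
    · obtain ⟨k, hk⟩ := hdvd
      exact ⟨-k, by linarith [hk]⟩
  · rintro c ⟨⟨hc1, hc2⟩, hc3, hc4⟩
    have hbr : q ∣ (b - r) := by
      rw [hb]; split
      · rename_i h0
        obtain ⟨k, hk⟩ := hdvd
        exact ⟨1 - k, by rw [h0] at hk; linarith [hk]⟩
      · obtain ⟨k, hk⟩ := hdvd
        exact ⟨-k, by linarith [hk]⟩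
    have hd : q ∣ (c - b) := by
      have := dvd_sub hc4 hbr
      simpa using this
    have hbl : (p : ℤ) * m < b := by rw [hb]; split <;> omega
    have hbu : b ≤ (p : ℤ) * m + q := by rw [hb]; split <;> omega
    obtain ⟨k, hk⟩ := hd
    have hk1 : -1 ≤ k := by nlinarith
    have hk2 : k ≤ 1 := by nlinarith
    interval_cases k
    · -- c - b = -q, so c = p*m, divisible by p
      exfalso
      have hc : c = (p : ℤ) * m := by omega
      exact hc3 (hc ▸ ⟨m, rfl⟩)
    · omega
    · -- c - b = q forces b = p*m, impossible
      exfalso; omega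
end

section
/- Let p be a prime and e ≥ 1, j ≥ 1 integers. The number of integers b with p·e·(1−j) ≤ b < p·e such that p ∤ b and (p−1) ∣ (b + e·(j−1)) equals e·j. Equivalently, the set of pairs (b,l) ∈ ℤ × ℕ satisfying p ∤ b, (p−1) ∣ (b + e·(j−1)), p·e − b > 0, p^l·(p·e − b) ≤ p·e·j and e·j < p^l·(p·e − b), has cardinality e·j. -/
private lemma aux_factor_le {P : ℤ} (hP : 1 < P) {l l' : ℕ} {n n' : ℤ}
    (hn : ¬ P ∣ n) (h : P ^ l * n = P ^ l' * n') (hll : l ≤ l') : l = l' ∧ n = n' := by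
  have hP0 : P ^ l ≠ 0 := by positivity
  have h2 : P ^ l * n = P ^ l * (P ^ (l' - l) * n') := by
    rw [← mul_assoc, ← pow_add]
    rwa [Nat.add_sub_cancel' hll]
  have h3 : n = P ^ (l' - l) * n' := mul_left_cancel₀ hP0 h2
  rcases Nat.eq_or_lt_of_le hll with rfl | hlt
  · refine ⟨rfl, ?_⟩
    simpa using h3
  · exfalso
    apply hn
    obtain ⟨m, hm⟩ : ∃ m, l' - l = m + 1 := ⟨l' - l - 1, by omega⟩
    exact ⟨P ^ m * n', by rw [h3, hm]; ring⟩

private lemma aux_factor_unique {P : ℤ} (hP : 1 < P) {l l' : ℕ} {n n' : ℤ}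
    (hn : ¬ P ∣ n) (hn' : ¬ P ∣ n') (h : P ^ l * n = P ^ l' * n') : l = l' ∧ n = n' := by
  rcases le_total l l' with hll | hll
  · exact aux_factor_le hP hn h hll
  · obtain ⟨h1, h2⟩ := aux_factor_le hP hn' h.symm hll
    exact ⟨h1.symm, h2.symm⟩

private lemma aux_exu {P M n : ℤ} (hP : 1 < P) (hn : 0 < n) (hnM : n ≤ P * M) :
    ∃! l : ℕ, M < P ^ l * n ∧ P ^ l * n ≤ P * M := by
  have hn1 : (1 : ℤ) ≤ n := hn
  have hex : ∃ l : ℕ, M < P ^ l * n := by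
    obtain ⟨l, hl⟩ := pow_unbounded_of_one_lt M hP
    exact ⟨l, lt_of_lt_of_le hl (le_mul_of_one_le_right (by positivity) hn1)⟩
  refine ⟨Nat.find hex, ⟨Nat.find_spec hex, ?_⟩, ?_⟩
  · rcases h0 : Nat.find hex with _ | l'
    · simpa using hnM
    · have hmin : ¬ M < P ^ l' * n := Nat.find_min hex (by omega)
      rw [pow_succ]
      have h2 : P * (P ^ l' * n) ≤ P * M :=
        mul_le_mul_of_nonneg_left (not_lt.mp hmin) (by linarith)
      have h3 : P ^ l' * P * n = P * (P ^ l' * n) := by ring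
      linarith
  · rintro y ⟨hy1, hy2⟩
    have h1 : Nat.find hex ≤ y := Nat.find_le hy1
    by_contra hne
    have hlt : Nat.find hex < y := lt_of_le_of_ne h1 (Ne.symm hne)
    have hps : P ^ (Nat.find hex + 1) ≤ P ^ y := pow_le_pow_right₀ (by linarith) hlt
    have h2 : P ^ (Nat.find hex + 1) * n ≤ P ^ y * n :=
      mul_le_mul_of_nonneg_right hps hn.le
    have h3 : P * M < P * (P ^ (Nat.find hex) * n) :=
      mul_lt_mul_of_pos_left (Nat.find_spec hex) (by linarith)
    have h4 : P ^ (Nat.find hex + 1) * n = P * (P ^ (Nat.find hex) * n) := by ring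
    linarith [h2, h3, h4 ▸ h2]

/-- Lemma 7.4 (dimension count): the number of integers `b` with `p·e·(1−j) ≤ b < p·e`, `p ∤ b`
and `(p−1) ∣ (b + e·(j−1))` equals `e·j`; equivalently the set of pairs `(b,l)` with `p ∤ b`,
`(p−1) ∣ (b + e·(j−1))`, `p·e − b > 0`, `p^l·(p·e − b) ≤ p·e·j` and `e·j < p^l·(p·e − b)` has
cardinality `e·j`. -/
theorem statement7 (p : ℕ) (hp : p.Prime) (e j : ℤ) (he : 1 ≤ e) (hj : 1 ≤ j) :
    ({b : ℤ | (p : ℤ) * e * (1 - j) ≤ b ∧ b < (p : ℤ) * e ∧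
        ¬ (p : ℤ) ∣ b ∧ ((p : ℤ) - 1) ∣ (b + e * (j - 1))}).ncard = (e * j).toNat ∧
    ({q : ℤ × ℕ | ¬ (p : ℤ) ∣ q.1 ∧ ((p : ℤ) - 1) ∣ (q.1 + e * (j - 1)) ∧
        0 < (p : ℤ) * e - q.1 ∧
        (p : ℤ) ^ q.2 * ((p : ℤ) * e - q.1) ≤ (p : ℤ) * e * j ∧
        e * j < (p : ℤ) ^ q.2 * ((p : ℤ) * e - q.1)}).ncard = (e * j).toNat := by
  set P : ℤ := (p : ℤ) with hPdef
  have hP : (1 : ℤ) < P := by rw [hPdef]; exact_mod_cast hp.one_lt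
  have hM : (1 : ℤ) ≤ e * j := by nlinarith
  set S1 : Set ℤ := {b : ℤ | P * e * (1 - j) ≤ b ∧ b < P * e ∧
      ¬ P ∣ b ∧ (P - 1) ∣ (b + e * (j - 1))} with hS1def
  set S2 : Set (ℤ × ℕ) := {q : ℤ × ℕ | ¬ P ∣ q.1 ∧ (P - 1) ∣ (q.1 + e * (j - 1)) ∧
      0 < P * e - q.1 ∧ P ^ q.2 * (P * e - q.1) ≤ P * e * j ∧
      e * j < P ^ q.2 * (P * e - q.1)} with hS2def
  set T : Set ℤ := {k : ℤ | e * j < k ∧ k ≤ P * e * j ∧ (P - 1) ∣ (k - e * j)} with hTdef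
  -- basic dvd facts
  have hPl1 : ∀ l : ℕ, (P - 1) ∣ (P ^ l - 1) := fun l => by
    simpa using sub_dvd_pow_sub_pow P 1 l
  have hdvd_iff : ∀ b : ℤ, (P - 1) ∣ (b + e * (j - 1)) ↔ (P - 1) ∣ (P * e - b - e * j) := by
    intro b
    constructor
    · intro h
      have : P * e - b - e * j = (P - 1) * e - (b + e * (j - 1)) := by ring
      rw [this]
      exact dvd_sub (Dvd.intro e rfl) h
    · intro h
      have : b + e * (j - 1) = (P - 1) * e - (P * e - b - e * j) := by ring
      rw [this]
      exact dvd_sub (Dvd.intro e rfl) h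
  have hnotdvd : ∀ b : ℤ, ¬ P ∣ b ↔ ¬ P ∣ (P * e - b) := by
    intro b
    constructor
    · intro h hc
      exact h (by have : b = P * e - (P * e - b) := by ring
                  rw [this]; exact dvd_sub (Dvd.intro e rfl) hc)
    · intro h hc
      exact h (dvd_sub (Dvd.intro e rfl) hc)
  -- factorization
  have hfac : ∀ k : ℤ, 0 < k → ∃ l : ℕ, ∃ n : ℤ, 0 < n ∧ ¬ P ∣ n ∧ k = P ^ l * n := by
    intro k hk
    have hk0 : k.toNat ≠ 0 := by omega
    obtain ⟨l, m, hm, hkm⟩ := Nat.exists_eq_pow_mul_and_not_dvd hk0 p hp.ne_one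
    have hm0 : m ≠ 0 := by rintro rfl; simp at hkm; omega
    refine ⟨l, (m : ℤ), by positivity, ?_, ?_⟩
    · rw [hPdef]; exact_mod_cast hm
    · have : (k.toNat : ℤ) = k := Int.toNat_of_nonneg hk.le
      rw [← this, hkm]; push_cast; ring
  -- InjOn of F on S2 and image = T
  have hF : Set.InjOn (fun q : ℤ × ℕ => P ^ q.2 * (P * e - q.1)) S2 := by
    rintro ⟨b, l⟩ hq ⟨b', l'⟩ hq' h
    simp only [hS2def, Set.mem_setOf_eq] at hq hq'
    obtain ⟨h1, h2⟩ := aux_factor_unique hP ((hnotdvd b).mp hq.1) ((hnotdvd b').mp hq'.1) h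
    have hb : b = b' := by linarith
    exact Prod.ext hb h1
  have hFimg : (fun q : ℤ × ℕ => P ^ q.2 * (P * e - q.1)) '' S2 = T := by
    ext k
    constructor
    · rintro ⟨⟨b, l⟩, hq, rfl⟩
      simp only [hS2def, Set.mem_setOf_eq] at hq
      obtain ⟨h1, h2, h3, h4, h5⟩ := hq
      refine ⟨h5, h4, ?_⟩
      have hd1 : (P - 1) ∣ ((P * e - b) - e * j) := (hdvd_iff b).mp h2
      have : P ^ l * (P * e - b) - e * j
          = (P ^ l - 1) * (P * e - b) + ((P * e - b) - e * j) := by ring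
      rw [this]
      exact dvd_add (Dvd.dvd.mul_right (hPl1 l) _) hd1
    · rintro ⟨hk1, hk2, hk3⟩
      have hk0 : 0 < k := by linarith
      obtain ⟨l, n, hn0, hnd, rfl⟩ := hfac k hk0
      refine ⟨(P * e - n, l), ?_, by show P ^ l * (P * e - (P * e - n)) = P ^ l * n; ring⟩
      have hpe : P * e - (P * e - n) = n := by ring
      simp only [hS2def, Set.mem_setOf_eq, hpe]
      have hd2 : (P - 1) ∣ (n - e * j) := by
        have : n - e * j = (P ^ l * n - e * j) - (P ^ l - 1) * n := by ring
        rw [this]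
        exact dvd_sub hk3 (Dvd.dvd.mul_right (hPl1 l) _)
      refine ⟨(hnotdvd _).mpr (by rwa [hpe]), ?_, hn0, hk2, hk1⟩
      rw [hdvd_iff, hpe]
      exact hd2
  -- fst : S2 → S1
  have hfst : Set.InjOn Prod.fst S2 := by
    rintro ⟨b, l⟩ hq ⟨b', l'⟩ hq' h
    simp only at h
    subst h
    simp only [hS2def, Set.mem_setOf_eq] at hq hq'
    obtain ⟨h1, h2, h3, h4, h5⟩ := hq
    obtain ⟨h1', h2', h3', h4', h5'⟩ := hq'
    have hpow : (1:ℤ) ≤ P ^ l := one_le_pow₀ hP.le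
    have hnM : P * e - b ≤ P * (e * j) := by
      have := le_mul_of_one_le_left h3.le hpow
      nlinarith
    have hexu := aux_exu hP h3 hnM
    have heq : l = l' := hexu.unique
      ⟨h5, by linarith [h4, mul_assoc P e j]⟩ ⟨h5', by linarith [h4', mul_assoc P e j]⟩
    simp [heq]
  have hfstimg : Prod.fst '' S2 = S1 := by
    ext b
    constructor
    · rintro ⟨⟨b', l⟩, hq, rfl⟩
      simp only [hS2def, Set.mem_setOf_eq] at hq
      obtain ⟨h1, h2, h3, h4, h5⟩ := hq
      have hpow : (1:ℤ) ≤ P ^ l := one_le_pow₀ hP.le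
      have hle : P * e - b' ≤ P * e * j := by
        have := le_mul_of_one_le_left h3.le hpow
        linarith
      exact ⟨by nlinarith, by linarith, h1, h2⟩
    · intro hb
      simp only [hS1def, Set.mem_setOf_eq] at hb
      obtain ⟨h1, h2, h3, h4⟩ := hb
      have hn0 : 0 < P * e - b := by linarith
      have hnM : P * e - b ≤ P * (e * j) := by nlinarith
      obtain ⟨l, ⟨hl1, hl2⟩, _⟩ := aux_exu hP hn0 hnM
      exact ⟨(b, l), ⟨h3, h4, hn0, by linarith [mul_assoc P e j], hl1⟩, rfl⟩
  -- count T
  have hT : T.ncard = (e * j).toNat := by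
    have himg : T = (fun t : ℤ => e * j + (P - 1) * t) '' (Set.Icc 1 (e * j)) := by
      ext k
      constructor
      · rintro ⟨hk1, hk2, t, ht⟩
        have hp1 : (0:ℤ) < P - 1 := by linarith
        have ht1 : (1:ℤ) ≤ t := by nlinarith
        have ht2 : t ≤ e * j := by nlinarith
        exact ⟨t, ⟨ht1, ht2⟩, show e * j + (P - 1) * t = k by linarith⟩
      · rintro ⟨t, ⟨ht1, ht2⟩, rfl⟩
        have hp1 : (0:ℤ) < P - 1 := by linarith
        show e * j < e * j + (P - 1) * t ∧ e * j + (P - 1) * t ≤ P * e * j ∧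
          (P - 1) ∣ (e * j + (P - 1) * t - e * j)
        exact ⟨by nlinarith, by nlinarith, t, by ring⟩
    have hinj : Set.InjOn (fun t : ℤ => e * j + (P - 1) * t) (Set.Icc 1 (e * j)) := by
      intro a _ b _ h
      simp only at h
      have hp1 : (P - 1) ≠ 0 := by intro hc; simp [sub_eq_zero] at hc; omega
      exact mul_left_cancel₀ hp1 (by linarith)
    rw [himg, Set.ncard_image_of_injOn hinj, ← Finset.coe_Icc, Set.ncard_coe_finset,
      Int.card_Icc]
    norm_num
  have hS2 : S2.ncard = (e * j).toNat := by
    rw [← hT, ← hFimg, Set.ncard_image_of_injOn hF]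
  have hS1 : S1.ncard = (e * j).toNat := by
    rw [← hS2, ← hfstimg, Set.ncard_image_of_injOn hfst]
  exact ⟨hS1, hS2⟩
end

section
/- Let p be a prime, k a finite field of characteristic p, and N : k^× → F_p^× the norm map of the extension k/F_p. For every b ∈ k^×, the F_p-linear map ψ_b : k → k given by ψ_b(x) = b·x^p − x is bijective if N(b) ≠ 1; and if N(b) = 1, then both the kernel of ψ_b and the cokernel k/ψ_b(k) have exactly p elements (each is a one-dimensional F_p-vector space). -/
/-- The `F_p`-linear (additive) map `ψ_b : k → k`, `ψ_b(x) = b·x^p − x`. -/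
def stmt8psi (p : ℕ) [Fact p.Prime] (k : Type*) [CommRing k] [CharP k p] (b : k) : k →+ k :=
  ((AddMonoidHom.mulLeft b).comp (frobenius k p).toAddMonoidHom) - AddMonoidHom.id k

/-!
A nonzero `x` lies in the kernel of `ψ_b` iff `b = (x⁻¹)^(p-1)`. In the cyclic group `kˣ` the
`(p-1)`-st powers form exactly the kernel of the norm `kˣ → 𝔽_pˣ`: they lie in it by Fermat, and
both subgroups have index `p - 1` because the norm is surjective. Hence `ker ψ_b ≠ 0` iff
`N(b) = 1`, and then `|ker ψ_b| = p`: at least `p` since nonzero elements have additive order `p`,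
at most `p` since its elements are roots of `b X^p - X`. The cokernel of an endomorphism of a
finite group has the size of its kernel.
-/

open Polynomial

namespace FiniteField

variable {K L : Type*} [Field K] [Field L] [Algebra K L] [Finite L]

theorem ker_unitsMap_norm_eq_range_powMonoidHom :
    (Units.map (Algebra.norm K (S := L))).ker =
      (powMonoidHom (Nat.card K - 1) : Lˣ →* Lˣ).range := by
  have : Finite K := Finite.of_injective _ (algebraMap K L).injective
  set N : Lˣ →* Kˣ := Units.map (Algebra.norm K (S := L))
  have hcard : Nat.card N.ker * (Nat.card K - 1) = Nat.card Lˣ := by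
    rw [← N.ker.card_mul_index, Subgroup.index_ker,
      MonoidHom.range_eq_top.mpr (unitsMap_norm_surjective K L), Subgroup.card_top, Nat.card_units]
  have hK : 0 < Nat.card K - 1 := Nat.sub_pos_of_lt Finite.one_lt_card
  refine (Subgroup.eq_of_le_of_card_ge ?_ ?_).symm
  · rintro _ ⟨c, rfl⟩
    rw [MonoidHom.mem_ker, powMonoidHom_apply, map_pow, ← Nat.card_units]
    exact pow_card_eq_one'
  · rw [IsCyclic.card_powMonoidHom_range, ← hcard, Nat.gcd_mul_left_left, Nat.mul_div_cancel _ hK]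

theorem norm_eq_one_iff_exists_pow_card_sub_one {b : L} (hb : b ≠ 0) :
    Algebra.norm K b = 1 ↔ ∃ c : Lˣ, (c : L) ^ (Nat.card K - 1) = b := by
  simpa [Units.ext_iff] using
    SetLike.ext_iff.mp (ker_unitsMap_norm_eq_range_powMonoidHom (K := K)) (Units.mk0 b hb)

end FiniteField

theorem AddSubgroup.prime_le_card_of_charP {R : Type*} [NonAssocRing R] (p : ℕ) [Fact p.Prime]
    [CharP R p] (H : AddSubgroup R) [Finite H] {x : R} (hxH : x ∈ H) (hx : x ≠ 0) :
    p ≤ Nat.card H := by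
  have hpx : p • x = 0 := by rw [nsmul_eq_mul, CharP.cast_eq_zero, zero_mul]
  exact Nat.le_of_dvd Nat.card_pos (addOrderOf_eq_prime hpx hx ▸ H.addOrderOf_dvd_natCard hxH)

section stmt8psi

variable {p : ℕ} [Fact p.Prime] {k : Type*} [Field k] [CharP k p] {b : k}

theorem stmt8psi_apply (x : k) : stmt8psi p k b x = b * x ^ p - x := rfl

theorem mem_ker_stmt8psi {x : k} : x ∈ (stmt8psi p k b).ker ↔ b * x ^ p = x := by
  rw [AddMonoidHom.mem_ker, stmt8psi_apply, sub_eq_zero]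

theorem val_mem_ker_stmt8psi_iff (u : kˣ) :
    (u : k) ∈ (stmt8psi p k b).ker ↔ ((u⁻¹ : kˣ) : k) ^ (p - 1) = b := by
  rw [mem_ker_stmt8psi, ← pow_sub_one_mul (Fact.out : p.Prime).ne_zero, ← mul_assoc,
    mul_eq_right₀ u.ne_zero, Units.val_inv_eq_inv_val, inv_pow, mul_comm,
    mul_eq_one_iff_inv_eq₀ (pow_ne_zero _ u.ne_zero)]

theorem exists_ne_zero_mem_ker_stmt8psi_iff_norm_eq_one [Finite k] [Algebra (ZMod p) k]
    (hb : b ≠ 0) :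
    (∃ x ∈ (stmt8psi p k b).ker, x ≠ 0) ↔ Algebra.norm (ZMod p) b = 1 := by
  rw [FiniteField.norm_eq_one_iff_exists_pow_card_sub_one hb, Nat.card_zmod]
  constructor
  · rintro ⟨x, hx, hx0⟩
    exact ⟨(Units.mk0 x hx0)⁻¹, (val_mem_ker_stmt8psi_iff _).mp hx⟩
  · rintro ⟨c, hc⟩
    exact ⟨_, (val_mem_ker_stmt8psi_iff c⁻¹).mpr (by rwa [inv_inv]), c⁻¹.ne_zero⟩

theorem card_ker_stmt8psi_le [Finite k] (hb : b ≠ 0) : Nat.card (stmt8psi p k b).ker ≤ p := by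
  classical
  have := Fintype.ofFinite k
  have hp : 1 < p := (Fact.out : p.Prime).one_lt
  have hdeg : (C b * X ^ p - X : k[X]).natDegree = p := by
    have hlead := natDegree_C_mul_X_pow p b hb
    rw [natDegree_sub_eq_left_of_natDegree_lt (by rwa [hlead, natDegree_X]), hlead]
  have hne : (C b * X ^ p - X : k[X]) ≠ 0 := ne_zero_of_natDegree_gt (hdeg ▸ hp)
  change Nat.card ((stmt8psi p k b).ker : Set k) ≤ p
  rw [Nat.card_eq_card_toFinset]
  refine (card_le_degree_of_subset_roots fun x hx => ?_).trans hdeg.le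
  rw [Finset.mem_val, Set.mem_toFinset, SetLike.mem_coe, mem_ker_stmt8psi] at hx
  simp [mem_roots hne, hx]

end stmt8psi

/-- Lemma 8.13 (Hilbert 90 for `k/F_p`): for a finite field `k` of characteristic `p` and
`b ∈ k^×`, the map `ψ_b(x) = b·x^p − x` is bijective if `N_{k/F_p}(b) ≠ 1`, and if
`N_{k/F_p}(b) = 1` then its kernel and cokernel both have exactly `p` elements. -/
theorem statement8 (p : ℕ) (hp : Fact p.Prime) (k : Type*) [Field k] [Finite k] [CharP k p]
    [Algebra (ZMod p) k] (b : k) (hb : b ≠ 0) :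
    (Algebra.norm (ZMod p) b ≠ 1 → Function.Bijective (stmt8psi p k b)) ∧
    (Algebra.norm (ZMod p) b = 1 →
      Nat.card (stmt8psi p k b).ker = p ∧
      Nat.card (k ⧸ (stmt8psi p k b).range) = p) := by
  have hker := exists_ne_zero_mem_ker_stmt8psi_iff_norm_eq_one (p := p) hb
  refine ⟨fun hN => ?_, fun hN => ?_⟩
  · have hbot := ((stmt8psi p k b).ker.bot_or_exists_ne_zero).resolve_right (mt hker.mp hN)
    exact Finite.injective_iff_bijective.mp ((AddMonoidHom.ker_eq_bot_iff _).mp hbot)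
  · obtain ⟨x, hx, hx0⟩ := hker.mpr hN
    have hcard : Nat.card (stmt8psi p k b).ker = p :=
      (card_ker_stmt8psi_le hb).antisymm (AddSubgroup.prime_le_card_of_charP p _ hx hx0)
    exact ⟨hcard, AddSubgroup.index_range.trans hcard⟩
end

section
/- Let p be a prime and g ∈ ℤ_p[X] a monic polynomial of degree p−1 whose constant coefficient equals p and all of whose remaining non-leading coefficients are divisible by p. Then g splits into linear factors over the p-th cyclotomic extension ℚ_p(ζ_p) of ℚ_p. -/
/-!
Write `n = p - 1` and `g = X^n + p·k` with `k(0) = 1`. The polynomial `Φ_p(X + 1)` has the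
same shape and `π = ζ_p - 1` is a root of it. The ring `A = ℤ_p[X]/(Φ_p(X + 1))` is finite
free over `ℤ_p`, hence complete for the `π`-adic topology (the ideals `(p)` and `(π)` have
comparable powers), and in `A` the relation `π^n + p·k_Φ(π) = 0` gives `p = ε·π^n` with
`ε ≡ -1 mod π`. Hence `g(πY) = π^n·h(Y)` with `h ≡ Y^n - 1 mod π`. The nonzero residues
`a mod p` are simple roots of `Y^n - 1` modulo `π`, so Hensel's lemma lifts them to `n` roots
`y_a ≡ a` of `h`, and the roots `π·y_a` of `g` are pairwise distinct because
`y_a - y_b ≡ a - b` is a unit.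
-/

open Polynomial

section AdicComplete

variable {R M : Type*} [CommRing R] [AddCommGroup M] [Module R M]

theorem Module.Basis.mem_ideal_smul_top_iff {ι : Type*} [Fintype ι] (b : Module.Basis ι R M)
    {J : Ideal R} {m : M} : m ∈ J • (⊤ : Submodule R M) ↔ ∀ j, b.repr m j ∈ J := by
  refine ⟨fun hm j => ?_, fun hm => ?_⟩
  · refine Submodule.smul_induction_on hm (fun r hr n _ => ?_) (fun x y hx hy => ?_)
    · simpa using J.mul_mem_right _ hr
    · simpa using J.add_mem hx hy
  · rw [← b.sum_repr m]
    exact Submodule.sum_mem _ fun j _ => Submodule.smul_mem_smul (hm j) trivial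

theorem Module.Basis.smodEq_ideal_smul_top_iff {ι : Type*} [Fintype ι] (b : Module.Basis ι R M)
    {J : Ideal R} {x y : M} :
    x ≡ y [SMOD J • (⊤ : Submodule R M)] ↔
      ∀ j, b.repr x j ≡ b.repr y j [SMOD J • (⊤ : Submodule R R)] := by
  simp only [SModEq.sub_mem, b.mem_ideal_smul_top_iff, map_sub, Finsupp.sub_apply, smul_eq_mul,
    Ideal.mul_top]

theorem IsAdicComplete.of_basis {I : Ideal R} [IsAdicComplete I R] {ι : Type*} [Fintype ι]
    (b : Module.Basis ι R M) : IsAdicComplete I M where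
  haus' x hx := b.ext_elem fun j => by
    have hj (n : ℕ) := b.smodEq_ideal_smul_top_iff.mp (hx n) j
    simp only [map_zero, Finsupp.coe_zero, Pi.zero_apply] at hj ⊢
    exact IsHausdorff.haus inferInstance _ hj
  prec' f hf := by
    choose c hc using fun j => IsPrecomplete.prec inferInstance (I := I)
      (f := fun n => b.repr (f n) j) fun hmn => b.smodEq_ideal_smul_top_iff.mp (hf hmn) j
    refine ⟨b.equivFun.symm c, fun n => b.smodEq_ideal_smul_top_iff.mpr fun j => ?_⟩
    rw [← b.equivFun_apply (b.equivFun.symm c), LinearEquiv.apply_symm_apply]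
    exact hc j n

theorem IsAdicComplete.of_le_of_pow_le {I J : Ideal R} [IsAdicComplete I M] {k : ℕ}
    (hIJ : I ≤ J) (hJI : J ^ k ≤ I) : IsAdicComplete J M := by
  have hpow (n : ℕ) : J ^ ((k + 1) * n) ≤ I ^ n := by
    rw [pow_mul]
    exact Ideal.pow_right_mono ((Ideal.pow_le_pow_right k.le_succ).trans hJI) n
  have hmono (n : ℕ) : (J ^ ((k + 1) * n) • ⊤ : Submodule R M) ≤ I ^ n • ⊤ :=
    Submodule.smul_mono_left (hpow n)
  refine { haus' := fun x hx => IsHausdorff.haus inferInstance x fun n => (hx _).mono (hmono n)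
           prec' := fun f hf => ?_ }
  obtain ⟨L, hL⟩ := IsPrecomplete.prec inferInstance (I := I) (f := fun n => f ((k + 1) * n))
    fun hmn => (hf (Nat.mul_le_mul_left _ hmn)).mono (hmono _)
  refine ⟨L, fun n => (hf (Nat.le_mul_of_pos_left n k.succ_pos)).trans ?_⟩
  exact (hL n).mono (Submodule.smul_mono_left (Ideal.pow_right_mono hIJ n))

theorem IsAdicComplete.map_algebraMap {S : Type*} [CommRing S] [Algebra R S] {I : Ideal R}
    [IsAdicComplete I S] : IsAdicComplete (I.map (algebraMap R S)) S where
  toIsHausdorff := IsHausdorff.map_algebraMap_iff.mpr inferInstance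
  toIsPrecomplete := IsPrecomplete.map_algebraMap_iff.mpr inferInstance

end AdicComplete

theorem AdjoinRoot.isAdicComplete_map_algebraMap {R : Type*} [CommRing R] {I : Ideal R}
    [IsAdicComplete I R] {f : R[X]} (hf : f.Monic) :
    IsAdicComplete (I.map (algebraMap R (AdjoinRoot f))) (AdjoinRoot f) :=
  haveI := IsAdicComplete.of_basis (I := I) (AdjoinRoot.powerBasis' hf).basis
  IsAdicComplete.map_algebraMap

theorem IsUnit.add_of_mem_jacobson_bot {R : Type*} [CommRing R] {u j : R} (hu : IsUnit u)
    (hj : j ∈ (⊥ : Ideal R).jacobson) : IsUnit (u + j) := by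
  obtain ⟨u, rfl⟩ := hu
  refine (u⁻¹.isUnit_units_mul _).mp (Ideal.isUnit_of_sub_one_mem_jacobson_bot _ ?_)
  rw [mul_add, Units.inv_mul, add_sub_cancel_left]
  exact Ideal.mul_mem_left _ _ hj

theorem Polynomial.splits_of_card_le {L : Type*} [Field L] {f : L[X]} (hf : f ≠ 0) (s : Finset L)
    (hs : ∀ z ∈ s, f.IsRoot z) (hcard : f.natDegree ≤ s.card) : f.Splits := by
  refine splits_iff_card_roots.mpr (le_antisymm (card_roots' f) (hcard.trans ?_))
  refine Multiset.card_le_card ((Multiset.le_iff_subset s.nodup).mpr fun z hz => ?_)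
  exact (mem_roots hf).mpr (hs z hz)

namespace Polynomial

variable {R : Type*} [CommRing R]

theorem IsMonicOfDegree.exists_eq_X_pow_add_C_mul [IsDomain R] {f : R[X]} {n : ℕ}
    (hf : IsMonicOfDegree f n) (hn : n ≠ 0) {q : R} (hq0 : q ≠ 0) (h0 : f.coeff 0 = q)
    (hq : ∀ i, 0 < i → i < n → q ∣ f.coeff i) :
    ∃ k : R[X], f = X ^ n + C q * k ∧ k.natDegree < n ∧ k.coeff 0 = 1 := by
  obtain ⟨r, rfl, hr⟩ := hf.exists_natDegree_lt hn
  have hcoeff (i : ℕ) (hi : i < n) : (X ^ n + r).coeff i = r.coeff i := by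
    simp [coeff_X_pow, hi.ne]
  obtain ⟨k, rfl⟩ : C q ∣ r := by
    refine C_dvd_iff_dvd_coeff _ _ |>.mpr fun i => ?_
    rcases Nat.eq_zero_or_pos i with rfl | hi
    · rw [← hcoeff 0 (Nat.pos_of_ne_zero hn), h0]
    rcases lt_or_ge i n with hin | hin
    · rw [← hcoeff i hin]
      exact hq i hi hin
    · rw [coeff_eq_zero_of_natDegree_lt (hr.trans_le hin)]
      exact dvd_zero q
  refine ⟨k, rfl, by rwa [natDegree_C_mul hq0] at hr, ?_⟩
  rw [hcoeff 0 (Nat.pos_of_ne_zero hn), coeff_C_mul] at h0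
  exact (mul_eq_left₀ hq0).mp h0

theorem dvd_eval_sub_coeff_zero (t : R) (k : R[X]) : t ∣ k.eval t - k.coeff 0 := by
  simpa [← coeff_zero_eq_eval_zero] using sub_dvd_eval_sub t 0 k

variable {t q ε : R} {n : ℕ} {k : R[X]}

theorem eval_mul_X_pow_add_C_mul (y : R) :
    eval (t * y) (X ^ n + C (ε * t ^ n) * k) =
      t ^ n * eval y (X ^ n + C ε * k.comp (C t * X)) := by
  simp only [eval_add, eval_pow, eval_X, eval_mul, eval_C, eval_comp]
  ring

theorem natDegree_comp_C_mul_X_le : (k.comp (C t * X)).natDegree ≤ k.natDegree :=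
  natDegree_comp_le.trans <| by
    simpa using Nat.mul_le_mul_left k.natDegree ((natDegree_C_mul_le t X).trans natDegree_X_le)

theorem natDegree_X_pow_add_C_mul_le (hk : k.natDegree < n) : (X ^ n + C q * k).natDegree ≤ n :=
  natDegree_add_le_of_degree_le (natDegree_X_pow_le n) ((natDegree_C_mul_le _ _).trans hk.le)

theorem monic_X_pow_add_C_mul (hk : k.natDegree < n) : (X ^ n + C q * k).Monic :=
  monic_X_pow_add (degree_le_natDegree.trans_lt
    (WithBot.coe_lt_coe.mpr ((natDegree_C_mul_le _ _).trans_lt hk)))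

theorem map_mk_X_pow_add_C_mul_comp (n : ℕ) (hε : ε + 1 ∈ Ideal.span {t})
    (hk0 : k.coeff 0 = 1) :
    (X ^ n + C ε * k.comp (C t * X)).map (Ideal.Quotient.mk (Ideal.span {t})) = X ^ n - 1 := by
  have ht : Ideal.Quotient.mk (Ideal.span {t}) t = 0 :=
    Ideal.Quotient.eq_zero_iff_mem.mpr (Ideal.mem_span_singleton_self t)
  have hε' : Ideal.Quotient.mk (Ideal.span {t}) ε = -1 :=
    eq_neg_of_add_eq_zero_left (by rw [← map_one (Ideal.Quotient.mk _), ← map_add,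
      Ideal.Quotient.eq_zero_iff_mem.mpr hε])
  simp [map_comp, ht, hε', hk0, ← coeff_zero_eq_eval_zero, sub_eq_add_neg]

theorem mem_span_of_isRoot_X_pow_add_C_mul (hn : n ≠ 0) (hk0 : k.coeff 0 = 1)
    (h : (X ^ n + C q * k).IsRoot t) : q ∈ Ideal.span {t} := by
  obtain ⟨m, rfl⟩ : ∃ m, n = m + 1 := ⟨n - 1, by omega⟩
  obtain ⟨c, hc⟩ := hk0 ▸ dvd_eval_sub_coeff_zero t k
  simp only [IsRoot, eval_add, eval_pow, eval_X, eval_mul, eval_C] at h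
  exact Ideal.mem_span_singleton.mpr ⟨-t ^ m - q * c, by linear_combination h - q * hc⟩

theorem pow_mem_span_of_isRoot_X_pow_add_C_mul (h : (X ^ n + C q * k).IsRoot t) :
    t ^ n ∈ Ideal.span {q} := by
  refine Ideal.mem_span_singleton'.mpr ⟨-k.eval t, ?_⟩
  simp only [IsRoot, eval_add, eval_pow, eval_X, eval_mul, eval_C] at h
  linear_combination -h

theorem exists_eq_mul_pow_of_isRoot_X_pow_add_C_mul
    (hjac : Ideal.span {t} ≤ (⊥ : Ideal R).jacobson) (hk0 : k.coeff 0 = 1)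
    (h : (X ^ n + C q * k).IsRoot t) :
    ∃ ε, q = ε * t ^ n ∧ ε + 1 ∈ Ideal.span {t} := by
  obtain ⟨c, hc⟩ := hk0 ▸ dvd_eval_sub_coeff_zero t k
  have hsub : k.eval t - 1 ∈ Ideal.span {t} := Ideal.mem_span_singleton.mpr ⟨c, hc⟩
  obtain ⟨u, hu⟩ := Ideal.isUnit_of_sub_one_mem_jacobson_bot _ (hjac hsub)
  simp only [IsRoot, eval_add, eval_pow, eval_X, eval_mul, eval_C, ← hu] at h hsub
  refine ⟨-↑u⁻¹, ?_, ?_⟩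
  · linear_combination (↑u⁻¹ : R) * h - q * u.inv_mul
  · convert Ideal.mul_mem_left _ (↑u⁻¹ : R) hsub using 1
    rw [mul_sub, u.inv_mul]
    ring

end Polynomial

theorem HenselianRing.exists_root_X_pow_add_C_mul {S : Type*} [CommRing S] {t : S}
    [HenselianRing S (Ideal.span {t})] {n : ℕ} {ε : S} (hε : ε + 1 ∈ Ideal.span {t})
    {k : S[X]} (hk : k.natDegree < n) (hk0 : k.coeff 0 = 1) {a : S}
    (ha : a ^ n - 1 ∈ Ideal.span {t}) (ha' : IsUnit ((n : S) * a ^ (n - 1))) :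
    ∃ y, (X ^ n + C (ε * t ^ n) * k).IsRoot (t * y) ∧ y - a ∈ Ideal.span {t} := by
  set h := X ^ n + C ε * k.comp (C t * X)
  have hmap := map_mk_X_pow_add_C_mul_comp n hε hk0
  have heval : h.eval a ∈ Ideal.span {t} := by
    rw [← Ideal.Quotient.eq_zero_iff_mem, ← eval_map_apply, hmap]
    simpa using Ideal.Quotient.eq_zero_iff_mem.mpr ha
  have hderiv : IsUnit (Ideal.Quotient.mk (Ideal.span {t}) (h.derivative.eval a)) := by
    rw [← eval_map_apply, ← derivative_map, hmap]
    convert ha'.map (Ideal.Quotient.mk (Ideal.span {t})) using 1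
    simp [derivative_X_pow]
  obtain ⟨y, hy, hya⟩ := HenselianRing.is_henselian h
    (monic_X_pow_add_C_mul (natDegree_comp_C_mul_X_le.trans_lt hk)) a heval hderiv
  refine ⟨y, ?_, hya⟩
  rw [IsRoot, eval_mul_X_pow_add_C_mul, hy.eq_zero, mul_zero]

theorem HenselianRing.splits_map_X_pow_add_C_mul {S L : Type*} [CommRing S] [Field L]
    (φ : S →+* L) {t : S} [HenselianRing S (Ideal.span {t})] (ht : φ t ≠ 0) {n : ℕ} {ε : S}
    (hε : ε + 1 ∈ Ideal.span {t}) {k : S[X]} (hk : k.natDegree < n) (hk0 : k.coeff 0 = 1)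
    {ι : Type*} [Fintype ι] (hcard : Fintype.card ι = n) (a : ι → S)
    (ha : ∀ i, a i ^ n - 1 ∈ Ideal.span {t}) (ha' : ∀ i, IsUnit ((n : S) * a i ^ (n - 1)))
    (hdist : Pairwise fun i j => IsUnit (a i - a j)) :
    ((X ^ n + C (ε * t ^ n) * k).map φ).Splits := by
  classical
  choose y hy hya using fun i => HenselianRing.exists_root_X_pow_add_C_mul hε hk hk0 (ha i) (ha' i)
  have hinj : Function.Injective fun i => φ (t * y i) := by
    intro i j hij
    by_contra hne
    have hunit : IsUnit (y i - y j) := by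
      convert (hdist hne).add_of_mem_jacobson_bot
        (HenselianRing.jac (sub_mem (hya i) (hya j))) using 1
      ring
    refine mul_ne_zero ht (hunit.map φ).ne_zero ?_
    rw [← map_mul, mul_sub, map_sub]
    exact sub_eq_zero.mpr hij
  refine splits_of_card_le ((monic_X_pow_add_C_mul hk).map φ).ne_zero
    (Finset.univ.image fun i => φ (t * y i)) (fun z hz => ?_) ?_
  · obtain ⟨i, -, rfl⟩ := Finset.mem_image.mp hz
    exact (hy i).map
  · rw [Finset.card_image_of_injective _ hinj, Finset.card_univ, hcard]
    exact natDegree_map_le.trans (natDegree_X_pow_add_C_mul_le hk)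
namespace AdjoinRoot

variable {R : Type*} [CommRing R] {q : R} {n : ℕ} {k : R[X]}

theorem isRoot_root_X_pow_add_C_mul :
    (X ^ n + C (of (X ^ n + C q * k) q) * k.map (of _)).IsRoot (root (X ^ n + C q * k)) := by
  have := isRoot_root (X ^ n + C q * k)
  rwa [Polynomial.map_add, Polynomial.map_pow, map_X, Polynomial.map_mul, map_C] at this

variable [IsAdicComplete (Ideal.span {q}) R] (hn : n ≠ 0) (hk0 : k.coeff 0 = 1)
  (hmonic : (X ^ n + C q * k).Monic)
include hn hk0 hmonic

theorem isAdicComplete_span_root :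
    IsAdicComplete (Ideal.span {root (X ^ n + C q * k)}) (AdjoinRoot (X ^ n + C q * k)) := by
  have hk0' : (k.map (of (X ^ n + C q * k))).coeff 0 = 1 := by rw [coeff_map, hk0, map_one]
  have := isAdicComplete_map_algebraMap (I := Ideal.span {q}) hmonic
  rw [Ideal.map_span, Set.image_singleton, algebraMap_eq] at this
  refine this.of_le_of_pow_le (k := n) ?_ ?_
  · exact Ideal.span_singleton_le_iff_mem _ |>.mpr
      (mem_span_of_isRoot_X_pow_add_C_mul hn hk0' isRoot_root_X_pow_add_C_mul)
  · rw [Ideal.span_singleton_pow, Ideal.span_singleton_le_iff_mem]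
    exact pow_mem_span_of_isRoot_X_pow_add_C_mul isRoot_root_X_pow_add_C_mul

theorem exists_of_eq_mul_root_pow :
    ∃ ε, of (X ^ n + C q * k) q = ε * root (X ^ n + C q * k) ^ n ∧
      ε + 1 ∈ Ideal.span {root (X ^ n + C q * k)} := by
  have := isAdicComplete_span_root hn hk0 hmonic
  exact exists_eq_mul_pow_of_isRoot_X_pow_add_C_mul HenselianRing.jac
    (by rw [coeff_map, hk0, map_one]) isRoot_root_X_pow_add_C_mul

end AdjoinRoot

namespace PadicInt

variable {p : ℕ} [Fact p.Prime]

instance isAdicComplete_span_p : IsAdicComplete (Ideal.span {(p : ℤ_[p])}) ℤ_[p] :=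
  maximalIdeal_eq_span_p (p := p) ▸ inferInstance

theorem isUnit_iff_toZMod_ne_zero {z : ℤ_[p]} : IsUnit z ↔ toZMod z ≠ 0 := by
  rw [← IsLocalRing.notMem_maximalIdeal, ← ker_toZMod, RingHom.mem_ker]

theorem natCast_dvd_iff_toZMod_eq_zero {z : ℤ_[p]} : (p : ℤ_[p]) ∣ z ↔ toZMod z = 0 := by
  rw [← Ideal.mem_span_singleton, ← maximalIdeal_eq_span_p, ← ker_toZMod, RingHom.mem_ker]

theorem toZMod_natCast_val (x : ZMod p) : toZMod (x.val : ℤ_[p]) = x := by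
  rw [map_natCast, ZMod.natCast_zmod_val]

theorem dvd_natCast_val_pow_sub_one (u : (ZMod p)ˣ) :
    (p : ℤ_[p]) ∣ ((u : ZMod p).val : ℤ_[p]) ^ (p - 1) - 1 := by
  rw [natCast_dvd_iff_toZMod_eq_zero, map_sub, map_pow, toZMod_natCast_val, map_one,
    ZMod.pow_card_sub_one_eq_one u.ne_zero, sub_self]

theorem isUnit_mul_natCast_val_pow (u : (ZMod p)ˣ) :
    IsUnit (((p - 1 : ℕ) : ℤ_[p]) * ((u : ZMod p).val : ℤ_[p]) ^ (p - 1 - 1)) := by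
  rw [isUnit_iff_toZMod_ne_zero, map_mul, map_pow, toZMod_natCast_val, map_natCast,
    Nat.cast_sub (Fact.out : p.Prime).one_le, ZMod.natCast_self]
  simp

theorem isUnit_natCast_val_sub {u v : (ZMod p)ˣ} (huv : u ≠ v) :
    IsUnit (((u : ZMod p).val : ℤ_[p]) - ((v : ZMod p).val : ℤ_[p])) := by
  rw [isUnit_iff_toZMod_ne_zero, map_sub, toZMod_natCast_val, toZMod_natCast_val, sub_ne_zero]
  exact Units.val_injective.ne huv

theorem splits_map_X_pow_add_C_mul {S L : Type*} [CommRing S]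
    [Algebra ℤ_[p] S] [Field L] (φ : S →+* L) {t : S} [HenselianRing S (Ideal.span {t})]
    (ht : φ t ≠ 0) {ε : S} (hp : (p : S) = ε * t ^ (p - 1)) (hε : ε + 1 ∈ Ideal.span {t})
    {k : ℤ_[p][X]} (hk : k.natDegree < p - 1) (hk0 : k.coeff 0 = 1) :
    ((X ^ (p - 1) + C (p : ℤ_[p]) * k).map (φ.comp (algebraMap ℤ_[p] S))).Splits := by
  set ι := algebraMap ℤ_[p] S
  have htp : t ∣ (p : S) :=
    hp ▸ (dvd_pow_self t (Nat.sub_pos_of_lt (Fact.out : p.Prime).one_lt).ne').mul_left ε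
  rw [← map_map, Polynomial.map_add, Polynomial.map_pow, map_X, Polynomial.map_mul, map_C,
    map_natCast, hp]
  refine HenselianRing.splits_map_X_pow_add_C_mul φ ht hε (natDegree_map_le.trans_lt hk)
    (by rw [coeff_map, hk0, map_one]) (ZMod.card_units p) (fun u => ι ((u : ZMod p).val))
    (fun u => ?_) (fun u => ?_) fun u v huv => ?_
  · refine Ideal.mem_span_singleton.mpr (htp.trans ?_)
    simpa using map_dvd ι (dvd_natCast_val_pow_sub_one u)
  · simpa using (isUnit_mul_natCast_val_pow u).map ι
  · simpa using (isUnit_natCast_val_sub huv).map ι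

theorem splits_map_X_pow_add_C_mul_of_eval₂_eq_zero {L : Type*} [Field L] (f : ℤ_[p] →+* L)
    {kE k : ℤ_[p][X]} (hkE : kE.natDegree < p - 1) (hkE0 : kE.coeff 0 = 1)
    (hk : k.natDegree < p - 1) (hk0 : k.coeff 0 = 1) {π : L} (hπ : π ≠ 0)
    (hroot : (X ^ (p - 1) + C (p : ℤ_[p]) * kE).eval₂ f π = 0) :
    ((X ^ (p - 1) + C (p : ℤ_[p]) * k).map f).Splits := by
  have hn : p - 1 ≠ 0 := (Nat.sub_pos_of_lt (Fact.out : p.Prime).one_lt).ne'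
  have hmonic := monic_X_pow_add_C_mul (q := (p : ℤ_[p])) hkE
  have := AdjoinRoot.isAdicComplete_span_root hn hkE0 hmonic
  obtain ⟨ε, hε, hε1⟩ := AdjoinRoot.exists_of_eq_mul_root_pow hn hkE0 hmonic
  rw [← AdjoinRoot.lift_comp_of (h := hroot), ← AdjoinRoot.algebraMap_eq]
  refine splits_map_X_pow_add_C_mul _ ?_ ((map_natCast _ p).symm.trans hε) hε1 hk hk0
  rwa [AdjoinRoot.lift_root]

end PadicInt

section Cyclotomic

variable (p : ℕ) [Fact p.Prime] (R : Type*) [CommRing R]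

theorem isMonicOfDegree_cyclotomic_comp_X_add_one [Nontrivial R] :
    IsMonicOfDegree ((cyclotomic p R).comp (X + 1)) (p - 1) := by
  have h : IsMonicOfDegree (cyclotomic p R) (p - 1) :=
    ⟨by rw [natDegree_cyclotomic, Nat.totient_prime Fact.out], cyclotomic.monic p R⟩
  simpa using h.comp one_ne_zero (by simpa using isMonicOfDegree_X_add_one (1 : R))

theorem coeff_zero_cyclotomic_comp_X_add_one :
    ((cyclotomic p R).comp (X + 1)).coeff 0 = p := by
  simp [coeff_zero_eq_eval_zero, eval_comp, eval_one_cyclotomic_prime]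

theorem dvd_coeff_cyclotomic_comp_X_add_one {i : ℕ} (hi : i < p - 1) :
    (p : R) ∣ ((cyclotomic p R).comp (X + 1)).coeff i := by
  have hdeg := (isMonicOfDegree_cyclotomic_comp_X_add_one p ℤ).natDegree_eq
  obtain ⟨c, hc⟩ := Ideal.mem_span_singleton.mp
    ((cyclotomic_comp_X_add_one_isEisensteinAt p).mem (hdeg ▸ hi))
  refine ⟨c, ?_⟩
  have hmap : ((cyclotomic p ℤ).comp (X + 1)).map (Int.castRingHom R) =
      (cyclotomic p R).comp (X + 1) := by
    simp [map_comp]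
  rw [← hmap, coeff_map, hc]
  simp

end Cyclotomic

theorem IsPrimitiveRoot.eval₂_cyclotomic_comp_X_add_one {R L : Type*} [CommRing R] [Field L]
    (f : R →+* L) {n : ℕ} [NeZero n] {ζ : L} (hζ : IsPrimitiveRoot ζ n) :
    ((cyclotomic n R).comp (X + 1)).eval₂ f (ζ - 1) = 0 := by
  rw [eval₂_comp, eval₂_add, eval₂_X, eval₂_one, sub_add_cancel, ← eval_map,
    map_cyclotomic]
  exact hζ.isRoot_cyclotomic (NeZero.pos n)

/-- Final step of Proposition 8.18: a monic polynomial `g ∈ ℤ_p[X]` of degree `p−1` with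
constant coefficient `p` and all other non-leading coefficients divisible by `p` splits into
linear factors over the `p`-th cyclotomic extension `ℚ_p(ζ_p)`. -/
theorem statement13 (p : ℕ) [hp : Fact p.Prime]
    (g : Polynomial ℤ_[p]) (hmonic : g.Monic) (hdeg : g.natDegree = p - 1)
    (hconst : g.coeff 0 = (p : ℤ_[p]))
    (hcoeff : ∀ i : ℕ, 0 < i → i < p - 1 → (p : ℤ_[p]) ∣ g.coeff i)
    (L : Type*) [Field L] [Algebra ℚ_[p] L]
    [IsCyclotomicExtension {p} ℚ_[p] L] :
    Polynomial.Splits ((g.map (algebraMap ℤ_[p] ℚ_[p])).map (algebraMap ℚ_[p] L)) := by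
  have hn : p - 1 ≠ 0 := (Nat.sub_pos_of_lt hp.out.one_lt).ne'
  have hp0 : (p : ℤ_[p]) ≠ 0 := Nat.cast_ne_zero.mpr hp.out.ne_zero
  obtain ⟨k, rfl, hk, hk0⟩ :=
    IsMonicOfDegree.exists_eq_X_pow_add_C_mul ⟨hdeg, hmonic⟩ hn hp0 hconst hcoeff
  obtain ⟨kE, hE, hkE, hkE0⟩ :=
    (isMonicOfDegree_cyclotomic_comp_X_add_one p ℤ_[p]).exists_eq_X_pow_add_C_mul hn hp0
      (coeff_zero_cyclotomic_comp_X_add_one p _)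
      fun _ _ hi => dvd_coeff_cyclotomic_comp_X_add_one p _ hi
  have hζ := IsCyclotomicExtension.zeta_spec p ℚ_[p] L
  rw [Polynomial.map_map]
  exact PadicInt.splits_map_X_pow_add_C_mul_of_eval₂_eq_zero _ hkE hkE0 hk hk0
    (sub_ne_zero.mpr (hζ.ne_one hp.out.one_lt)) (hE ▸ hζ.eval₂_cyclotomic_comp_X_add_one _)
end
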